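/- arXiv:2212.09314 — 2 statements merged into one kernel-verified Lean document; each statement's English description precedes it below -/
import Mathlib

section
/- The sequence of ratios r ↦ ((r+1)·s_{r+1})/((n−r)·s_r), defined for integers 0 ≤ r < n, is non-increasing in r; that is, for all 0 ≤ r ≤ n−2, ((r+2)·s_{r+2})/((n−r−1)·s_{r+1}) ≤ ((r+1)·s_{r+1})/((n−r)·s_r) (equivalently, (n−r)(r+2)·s_{r+2}·s_r ≤ (n−r−1)(r+1)·s_{r+1}²). -/
/-!
Put `x i = q i - 1 > 0`. A vector of weight `r` is an `r`-set `S` of coordinates together with a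
nonzero value at each coordinate of `S`, so `s_r = e_r(x)`, the `r`-th elementary symmetric
function of `x`. For the means `E_r = e_r / C(n, r)` Newton's inequality `E_r E_{r+2} ≤ E_{r+1}²`
holds, and the identities `(n - r) C(n, r) = (r + 1) C(n, r + 1)` turn it into the claim.

Newton's inequality is proved by induction on the number of variables: adjoining a variable `a`
to `s` (of size `m - 1`) gives `m E'_w = (m - w) E_w + a w E_{w-1}`, and then
`m² (E'_{w+1}² - E'_w E'_{w+2})` is a nonnegative combination of the inequalities
`E_{w-1} E_{w+1} ≤ E_w²`, `E_w E_{w+2} ≤ E_{w+1}²`, `E_{w-1} E_{w+2} ≤ E_w E_{w+1}` for `s`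
and of `(E_{w+1} - a E_w)²`.
-/

/-- The Hamming weight of `x ∈ Q = ∏ i, ℤ/q_iℤ`: the number of coordinates `i`
with `x i ≠ 0`. -/
def mwt {n : ℕ} {q : Fin n → ℕ} (x : ∀ i, ZMod (q i)) : ℕ :=
  (Finset.univ.filter (fun i => x i ≠ 0)).card

/-- `sph q r` is `s_r`, the number of `x ∈ Q` with `wt(x) = r`. -/
noncomputable def sph {n : ℕ} (q : Fin n → ℕ) (r : ℕ) : ℕ :=
  Nat.card {x : ∀ i, ZMod (q i) // mwt x = r}

/-- `sphI q r I` is `s_r(I)`, the number of `x ∈ Q` with `wt(x) = r` and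
`supp(x) ⊆ I`. -/
noncomputable def sphI {n : ℕ} (q : Fin n → ℕ) (r : ℕ) (I : Finset (Fin n)) : ℕ :=
  Nat.card {x : ∀ i, ZMod (q i) // mwt x = r ∧ ∀ i, x i ≠ 0 → i ∈ I}

theorem Nat.cast_sub_mul_choose {R : Type*} [CommRing R] {m k : ℕ} (h : k ≤ m) :
    ((m : R) - k) * m.choose k = (k + 1) * m.choose (k + 1) := by
  have := congrArg (Nat.cast : ℕ → R) (Nat.choose_succ_right_eq m k)
  push_cast [Nat.cast_sub h] at this
  linear_combination -this

section OrderedRing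

variable {R : Type*} [CommRing R] [LinearOrder R] [IsStrictOrderedRing R]

theorem mul_le_mul_of_mul_le_sq {b c d e : R} (hb : 0 < b) (hd : 0 < d) (he : 0 ≤ e)
    (h₁ : c * d ≤ b ^ 2) (h₂ : b * e ≤ d ^ 2) : c * e ≤ b * d := by
  have : (b * d) * (c * e) ≤ (b * d) * (b * d) := by
    nlinarith [mul_le_mul h₁ h₂ (mul_nonneg hb.le he) (sq_nonneg b)]
  exact le_of_mul_le_mul_left this (mul_pos hb hd)

/- With `m = card s + 1`: `c, b, d, e` are the means `E_{w-1}, …, E_{w+2}` of `s`, and `X, Y, Z`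
the means `E_w, E_{w+1}, E_{w+2}` of `a ::ₘ s` (see `Multiset.esymmMean_cons_succ`). -/
theorem newton_inequality_step {m w a b c d e X Y Z : R} (ha : 0 ≤ a) (hw : 0 ≤ w)
    (hwm : w + 2 ≤ m)
    (h₁ : c * d ≤ b ^ 2) (h₂ : b * e ≤ d ^ 2) (h₃ : c * e ≤ b * d)
    (hX : m * X = (m - w) * b + a * w * c)
    (hY : m * Y = (m - w - 1) * d + a * (w + 1) * b)
    (hZ : m * Z = (m - w - 2) * e + a * (w + 2) * d) :
    X * Z ≤ Y ^ 2 := by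
  have hm : 0 < m ^ 2 := by nlinarith
  have t₁ : 0 ≤ (m - w) * (m - w - 2) * (d ^ 2 - b * e) :=
    mul_nonneg (mul_nonneg (by linarith) (by linarith)) (by linarith)
  have t₂ : 0 ≤ a * w * (m - w - 2) * (b * d - c * e) :=
    mul_nonneg (mul_nonneg (mul_nonneg ha hw) (by linarith)) (by linarith)
  have t₃ : 0 ≤ a ^ 2 * w * (w + 2) * (b ^ 2 - c * d) :=
    mul_nonneg (mul_nonneg (mul_nonneg (sq_nonneg a) hw) (by linarith)) (by linarith)
  have key : (m * X) * (m * Z) ≤ (m * Y) ^ 2 := by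
    rw [hX, hY, hZ]
    linear_combination t₁ + t₂ + t₃ + sq_nonneg (d - a * b)
  refine le_of_mul_le_mul_left ?_ hm
  linear_combination key

end OrderedRing

namespace Multiset

section Esymm

variable {R : Type*} [CommSemiring R]

theorem esymm_zero (s : Multiset R) : s.esymm 0 = 1 := by
  simp [esymm, powersetCard_zero_left]

theorem esymm_cons_succ (a : R) (s : Multiset R) (k : ℕ) :
    (a ::ₘ s).esymm (k + 1) = s.esymm (k + 1) + a * s.esymm k := by
  simp [esymm, map_map, sum_map_mul_left]

theorem esymm_eq_zero_of_card_lt {s : Multiset R} {k : ℕ} (h : card s < k) : s.esymm k = 0 := by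
  simp [esymm, powersetCard_eq_empty k h]

variable [PartialOrder R] [IsStrictOrderedRing R]

theorem esymm_nonneg {s : Multiset R} (hs : ∀ x ∈ s, 0 ≤ x) (k : ℕ) : 0 ≤ s.esymm k :=
  sum_nonneg fun _ hy => by
    obtain ⟨t, ht, rfl⟩ := mem_map.1 hy
    exact prod_nonneg fun x hx => hs x (mem_of_le (mem_powersetCard.1 ht).1 hx)

theorem esymm_pos {s : Multiset R} (hs : ∀ x ∈ s, 0 < x) {k : ℕ} (hk : k ≤ card s) :
    0 < s.esymm k := by
  induction s using Multiset.induction_on generalizing k with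
  | empty => simp_all [esymm_zero]
  | cons a s ih =>
    rw [forall_mem_cons] at hs
    rcases k with _ | k
    · simp [esymm_zero]
    · rw [esymm_cons_succ]
      exact add_pos_of_nonneg_of_pos (esymm_nonneg (fun x hx => (hs.2 x hx).le) _)
        (mul_pos hs.1 (ih hs.2 (by simpa using hk)))

end Esymm

section Mean

variable {R : Type*} [Field R]

noncomputable def esymmMean (s : Multiset R) (k : ℕ) : R :=
  s.esymm k / (card s).choose k

theorem esymmMean_zero (s : Multiset R) : s.esymmMean 0 = 1 := by
  simp [esymmMean, esymm_zero]

theorem esymmMean_eq_zero_of_card_lt {s : Multiset R} {k : ℕ} (h : card s < k) :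
    s.esymmMean k = 0 := by
  simp [esymmMean, esymm_eq_zero_of_card_lt h]

variable [LinearOrder R] [IsStrictOrderedRing R]

theorem esymm_eq_choose_mul_esymmMean (s : Multiset R) (k : ℕ) :
    s.esymm k = (card s).choose k * s.esymmMean k := by
  rcases le_or_gt k (card s) with h | h
  · rw [esymmMean, mul_div_cancel₀]
    exact_mod_cast (Nat.choose_pos h).ne'
  · simp [esymmMean, esymm_eq_zero_of_card_lt h]

theorem esymmMean_nonneg {s : Multiset R} (hs : ∀ x ∈ s, 0 ≤ x) (k : ℕ) : 0 ≤ s.esymmMean k :=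
  div_nonneg (esymm_nonneg hs k) (Nat.cast_nonneg _)

theorem esymmMean_pos {s : Multiset R} (hs : ∀ x ∈ s, 0 < x) {k : ℕ} (hk : k ≤ card s) :
    0 < s.esymmMean k :=
  div_pos (esymm_pos hs hk) (by exact_mod_cast Nat.choose_pos hk)

theorem esymmMean_cons_succ (a : R) (s : Multiset R) {k : ℕ} (hk : k ≤ card s) :
    ((card s : R) + 1) * (a ::ₘ s).esymmMean (k + 1)
      = (card s - k) * s.esymmMean (k + 1) + a * (k + 1) * s.esymmMean k := by
  have hC : ((card s + 1).choose (k + 1) : R) ≠ 0 := by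
    exact_mod_cast (Nat.choose_pos (by omega)).ne'
  have h₁ := congrArg (Nat.cast : ℕ → R) (Nat.choose_mul_succ_eq (card s) (k + 1))
  have h₂ := congrArg (Nat.cast : ℕ → R) (Nat.add_one_mul_choose_eq (card s) k)
  push_cast [Nat.cast_sub hk] at h₁ h₂
  have h := esymm_eq_choose_mul_esymmMean (a ::ₘ s) (k + 1)
  rw [card_cons, esymm_cons_succ, esymm_eq_choose_mul_esymmMean s (k + 1),
    esymm_eq_choose_mul_esymmMean s k] at h
  apply mul_left_cancel₀ hC
  linear_combination
    -((card s : R) + 1) * h + s.esymmMean (k + 1) * h₁ + a * s.esymmMean k * h₂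

theorem esymmMean_mul_le_sq {s : Multiset R} (hs : ∀ x ∈ s, 0 < x) (r : ℕ) :
    s.esymmMean r * s.esymmMean (r + 2) ≤ s.esymmMean (r + 1) ^ 2 := by
  induction s using Multiset.induction_on generalizing r with
  | empty =>
    rw [esymmMean_eq_zero_of_card_lt (k := r + 2) (by simp), mul_zero]
    positivity
  | cons a s ih =>
    rw [forall_mem_cons] at hs
    obtain ⟨ha, hs⟩ := hs
    rcases lt_or_ge (card s + 1) (r + 2) with hr | hr
    · rw [esymmMean_eq_zero_of_card_lt (k := r + 2) (by simpa using hr), mul_zero]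
      positivity
    have hE := esymmMean_nonneg fun x hx => (hs x hx).le
    have hrec := fun k => esymmMean_cons_succ a s (k := k)
    have hm : (r : R) + 2 ≤ card s + 1 := by exact_mod_cast hr
    rcases r with _ | v
    · refine newton_inequality_step (m := (card s : R) + 1) (w := 0) (b := s.esymmMean 0)
        (c := 0) ha.le le_rfl (by simpa using hm) (by simpa using sq_nonneg _) (ih hs 0)
        (by simpa using mul_nonneg (hE 0) (hE 1)) (by simp [esymmMean_zero]) ?_ ?_
      · rw [hrec 0 (by omega)]; ring
      · rw [hrec 1 (by omega)]; push_cast; ring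
    · refine newton_inequality_step (m := (card s : R) + 1) (w := (v : R) + 1) ha.le
        (by positivity) (by push_cast at hm; linarith) (ih hs v) (ih hs (v + 1))
        (mul_le_mul_of_mul_le_sq (esymmMean_pos hs (by omega)) (esymmMean_pos hs (by omega))
          (hE _) (ih hs v) (ih hs (v + 1))) ?_ ?_ ?_
      · rw [hrec v (by omega)]; ring
      · rw [hrec (v + 1) (by omega)]; push_cast; ring
      · rw [hrec (v + 2) (by omega)]; push_cast; ring

theorem sub_mul_esymm_mul_esymm_le {s : Multiset R} (hs : ∀ x ∈ s, 0 < x) {r : ℕ}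
    (hr : r + 2 ≤ card s) :
    ((card s : R) - r) * (r + 2) * (s.esymm r * s.esymm (r + 2))
      ≤ ((card s : R) - r - 1) * (r + 1) * s.esymm (r + 1) ^ 2 := by
  have h₀ := Nat.cast_sub_mul_choose (R := R) (show r ≤ card s by omega)
  have h₁ := Nat.cast_sub_mul_choose (R := R) (show r + 1 ≤ card s by omega)
  have hm : (r : R) + 2 ≤ card s := by exact_mod_cast hr
  push_cast at h₁
  simp only [esymm_eq_choose_mul_esymmMean s]
  calc _ = ((r : R) + 1) * (card s - r - 1) * ((card s).choose (r + 1) : R) ^ 2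
          * (s.esymmMean r * s.esymmMean (r + 2)) := by
        linear_combination ((r : R) + 2) * (card s).choose (r + 2) * s.esymmMean r
          * s.esymmMean (r + 2) * h₀ - ((r : R) + 1) * (card s).choose (r + 1) * s.esymmMean r
          * s.esymmMean (r + 2) * h₁
    _ ≤ ((r : R) + 1) * (card s - r - 1) * ((card s).choose (r + 1) : R) ^ 2
          * s.esymmMean (r + 1) ^ 2 := by
        gcongr
        · exact mul_nonneg (mul_nonneg (by positivity) (by linarith)) (by positivity)
        · exact esymmMean_mul_le_sq hs r
    _ = _ := by ring

end Mean

end Multiset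

section HammingCount

open Finset

variable {ι : Type*} [Fintype ι] [DecidableEq ι] {β : ι → Type*} [∀ i, Fintype (β i)]
  [∀ i, DecidableEq (β i)] [∀ i, Zero (β i)]

theorem card_filter_support_eq (S : Finset ι) :
    #{x : ∀ i, β i | ({i | x i ≠ 0} : Finset ι) = S} = ∏ i ∈ S, (Fintype.card (β i) - 1) := by
  have : ({x : ∀ i, β i | ({i | x i ≠ 0} : Finset ι) = S} : Finset _)
      = Fintype.piFinset fun i => if i ∈ S then ({0}ᶜ : Finset (β i)) else {0} := by
    ext x
    simp only [mem_filter, mem_univ, true_and, Fintype.mem_piFinset, Finset.ext_iff]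
    refine forall_congr' fun i => ?_
    by_cases hi : i ∈ S <;> simp [hi]
  rw [this, Fintype.card_piFinset, ← Fintype.prod_ite_mem S]
  refine prod_congr rfl fun i _ => ?_
  split_ifs <;> simp [card_compl]

theorem card_hammingNorm_eq (r : ℕ) :
    #{x : ∀ i, β i | hammingNorm x = r}
      = ∑ S ∈ powersetCard r univ, ∏ i ∈ S, (Fintype.card (β i) - 1) := by
  rw [card_eq_sum_card_fiberwise (f := fun x : ∀ i, β i => ({i | x i ≠ 0} : Finset ι))
    (t := powersetCard r univ)]
  · refine sum_congr rfl fun S hS => ?_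
    rw [← card_filter_support_eq, filter_filter]
    refine congrArg card (filter_congr fun x _ => ?_)
    rw [mem_powersetCard] at hS
    exact ⟨And.right, fun h => ⟨by rw [hammingNorm, h, hS.2], h⟩⟩
  · intro x hx
    simpa [mem_powersetCard, hammingNorm] using hx

end HammingCount

open Finset in
theorem sph_eq_esymm {n : ℕ} (q : Fin n → ℕ) (hq : ∀ i, 2 ≤ q i) (r : ℕ) :
    (sph q r : ℝ) = (univ.val.map fun i => (q i : ℝ) - 1).esymm r := by
  have : ∀ i, NeZero (q i) := fun i => ⟨by have := hq i; omega⟩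
  rw [sph, Nat.card_eq_fintype_card, Fintype.card_subtype]
  change (#{x : ∀ i, ZMod (q i) | hammingNorm x = r} : ℝ) = _
  rw [card_hammingNorm_eq, esymm_map_val]
  push_cast
  refine sum_congr rfl fun S _ => prod_congr rfl fun i _ => ?_
  rw [ZMod.card, Nat.cast_sub (by linarith [hq i]), Nat.cast_one]

theorem stmt4_general (n : ℕ) (q : Fin n → ℕ) (hq : ∀ i, 2 ≤ q i)
    (r : ℕ) (hr : r + 2 ≤ n) :
    ((r : ℝ) + 2) * sph q (r + 2) / ((((n : ℝ) - r) - 1) * sph q (r + 1))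
      ≤ ((r : ℝ) + 1) * sph q (r + 1) / (((n : ℝ) - r) * sph q r) := by
  simp only [sph_eq_esymm q hq]
  set s : Multiset ℝ := Finset.univ.val.map fun i => (q i : ℝ) - 1
  have hs : ∀ x ∈ s, 0 < x := Multiset.forall_mem_map_iff.2 fun i _ => by
    have : (2 : ℝ) ≤ q i := by exact_mod_cast hq i
    linarith
  have hcard : Multiset.card s = n := by simp [s]
  have key := s.sub_mul_esymm_mul_esymm_le hs (r := r) (by omega)
  rw [hcard] at key
  have h₀ := s.esymm_pos hs (k := r) (by omega)
  have h₁ := s.esymm_pos hs (k := r + 1) (by omega)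
  have hnr : (r : ℝ) + 2 ≤ n := by exact_mod_cast hr
  rw [div_le_div_iff₀ (mul_pos (by linarith) h₁) (mul_pos (by linarith) h₀)]
  linear_combination key

/-- The ratio `((r+1) s_{r+1}) / ((n-r) s_r)` is non-increasing in `r`:
for `0 ≤ r ≤ n - 2`,
`((r+2) s_{r+2}) / ((n-r-1) s_{r+1}) ≤ ((r+1) s_{r+1}) / ((n-r) s_r)`. -/
theorem stmt4 (n : ℕ) (hn : 1 ≤ n) (q : Fin n → ℕ) (hq : ∀ i, 2 ≤ q i)
    (r : ℕ) (hr : r + 2 ≤ n) :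
    ((r : ℝ) + 2) * sph q (r + 2) / ((((n : ℝ) - r) - 1) * sph q (r + 1))
      ≤ ((r : ℝ) + 1) * sph q (r + 1) / (((n : ℝ) - r) * sph q r) :=
  stmt4_general n q hq r hr
end

section
/- Let √n < r ≤ n be an integer and set M = ⌊√n⌋. Then there exists a nonzero function f : Q → ℝ supported in B_r(0) = {x : wt(x) ≤ r} such that ∑_{x∈Q}(∑_{y: d(x,y)=1} f(y))·f(x) ≥ L·∑_{x∈Q} f(x)², where L = (1/M)·∑_{k=r−M+2}^{r−1} ( k·√(s_k/s_{k−1}) + n(q̂_a−1) − k − (k+1)·s_{k+1}/s_k + (k+1)·√(s_{k+1}/s_k) ). Equivalently, the maximum eigenvalue λ_{B_r(0)} of the adjacency minor of the Hamming graph on B_r(0) is at least L. -/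
/-- The arithmetic mean `q̂_a = (1/n) ∑ q_i` of the alphabet sizes. -/
noncomputable def qa {n : ℕ} (q : Fin n → ℕ) : ℝ :=
  (∑ i : Fin n, (q i : ℝ)) / n

/-- The adjacency operator of the Hamming graph on `Q = ∏ i, ℤ/q_iℤ`:
`(adjOp f) x = ∑_{y : d(x,y)=1} f y`. -/
noncomputable def adjOp {n : ℕ} {q : Fin n → ℕ} [∀ i, NeZero (q i)]
    (f : (∀ i, ZMod (q i)) → ℝ) (x : ∀ i, ZMod (q i)) : ℝ :=
  ∑ y ∈ Finset.univ.filter (fun y : ∀ i, ZMod (q i) => mwt (x - y) = 1), f y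

/-!
Test the Rayleigh quotient on the radial function `f x = c (wt x)` with `c k = s_k^{-1/2}` on the
shell `r - M + 1 ≤ k ≤ r` and `c k = 0` elsewhere, so that `‖f‖² = M`. A vertex `x` of weight `m`
has `m` neighbours of weight `m - 1`, `upDegree x` neighbours of weight `m + 1` and the remaining
`D - m - upDegree x` of weight `m`, where `D = n (q̂_a - 1)`. Double counting the edges between
consecutive spheres gives `∑_{wt x = m} upDegree x = (m + 1) s_{m+1}`, so `⟨Af, f⟩ = ∑_m T_m` with
`T_m` depending only on `c` and the sphere sizes. Each `T_m` is nonnegative because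
`(m + 1) s_{m+1} ≤ (D - m) s_m`, and for `m` strictly inside the shell `T_m` is exactly the `m`-th
summand of the bound; dropping the two boundary terms gives the claim.
-/

open Finset Function

variable {n : ℕ} {q : Fin n → ℕ}

section Weight

variable {x : ∀ i, ZMod (q i)} {i : Fin n} {v : ZMod (q i)}

lemma mwt_le (x : ∀ i, ZMod (q i)) : mwt x ≤ n :=
  (card_filter_le _ _).trans_eq (card_fin n)

lemma mwt_update_of_eq_zero (hx : x i = 0) (hv : v ≠ 0) : mwt (update x i v) = mwt x + 1 := by
  have : univ.filter (fun j => update x i v j ≠ 0) = insert i (univ.filter fun j => x j ≠ 0) := by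
    ext j
    rcases eq_or_ne j i with rfl | h
    · simp [hv]
    · simp [h]
  rw [mwt, this, card_insert_of_notMem (by simp [hx]), mwt]

lemma mwt_update_zero_add_one (hx : x i ≠ 0) : mwt (update x i 0) + 1 = mwt x := by
  simpa using (mwt_update_of_eq_zero (x := update x i 0) (update_self ..) hx).symm

lemma mwt_sub_eq_one_iff {y : ∀ i, ZMod (q i)} :
    mwt (x - y) = 1 ↔ ∃ i, y i ≠ x i ∧ update x i (y i) = y := by
  simp only [mwt, card_eq_one, eq_singleton_iff_unique_mem, update_eq_iff, mem_filter, mem_univ,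
    true_and, Pi.sub_apply, sub_ne_zero]
  refine exists_congr fun i => and_congr ne_comm (forall_congr' fun j => ?_)
  rw [← not_imp_not, not_not]

lemma sigma_mk_eq_of_update_eq {j : Fin n} {w : ZMod (q j)} (hv : v ≠ x i)
    (h : update x i v = update x j w) : (⟨i, v⟩ : Σ i, ZMod (q i)) = ⟨j, w⟩ := by
  obtain rfl : i = j := by
    by_contra hij
    exact hv (by simpa [update_of_ne hij] using congrFun h i)
  simpa using congrFun h i

end Weight

section Degree

variable (q) in
def hammingDegree : ℝ := ∑ i, ((q i : ℝ) - 1)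

/-- The number of neighbours of `x` of weight `wt x + 1`. -/
def upDegree (x : ∀ i, ZMod (q i)) : ℝ := ∑ i ∈ univ.filter (fun i => x i = 0), ((q i : ℝ) - 1)

lemma hammingDegree_eq_mul_qa : hammingDegree q = n * (qa q - 1) := by
  rcases eq_or_ne n 0 with rfl | hn
  · simp [hammingDegree]
  · rw [hammingDegree, qa, sum_sub_distrib, sum_const, card_univ, Fintype.card_fin]
    field_simp
    simp

lemma hammingDegree_eq_upDegree_add (x : ∀ i, ZMod (q i)) :
    hammingDegree q = upDegree x + ∑ i ∈ univ.filter (fun i => ¬ x i = 0), ((q i : ℝ) - 1) :=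
  (sum_filter_add_sum_filter_not _ _ _).symm

lemma two_le_of_ne_zero {m : ℕ} [NeZero m] {v : ZMod m} (hv : v ≠ 0) : 2 ≤ m := by
  rcases m with _ | _ | m
  · exact absurd rfl (NeZero.ne 0)
  · exact absurd (Subsingleton.elim (α := Fin 1) v 0) hv
  · omega

lemma upDegree_add_mwt_le [∀ i, NeZero (q i)] (x : ∀ i, ZMod (q i)) :
    upDegree x + mwt x ≤ hammingDegree q := by
  have h : ∀ i ∈ univ.filter (fun i => ¬ x i = 0), (1 : ℝ) ≤ q i - 1 := fun i hi => by
    have : (2 : ℝ) ≤ q i := by exact_mod_cast two_le_of_ne_zero (mem_filter.mp hi).2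
    linarith
  have := card_nsmul_le_sum _ _ _ h
  rw [nsmul_one] at this
  rw [hammingDegree_eq_upDegree_add x, mwt]
  linarith

lemma cast_card_filter_ne_zero (m : ℕ) [NeZero m] : (#(univ.filter fun v : ZMod m => v ≠ 0) : ℝ) = m - 1 := by
  rw [filter_ne', card_erase_of_mem (mem_univ _), card_univ, ZMod.card, Nat.cast_sub NeZero.one_le,
    Nat.cast_one]

end Degree

section Radial

variable [∀ i, NeZero (q i)]

lemma adjOp_eq_sum_update (f : (∀ i, ZMod (q i)) → ℝ) (x : ∀ i, ZMod (q i)) :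
    adjOp f x = ∑ i, ((∑ v, f (update x i v)) - f x) := by
  have hnbhd : adjOp f x = ∑ p ∈ univ.sigma fun i => univ.erase (x i), f (update x p.1 p.2) := by
    refine (sum_nbij (fun p : Σ i, ZMod (q i) => update x p.1 p.2) ?_ ?_ ?_ fun _ _ => rfl).symm
    · rintro ⟨i, v⟩ hv
      simp only [mem_sigma, mem_erase, mem_univ, and_true] at hv
      simpa [mwt_sub_eq_one_iff] using ⟨i, by simpa using hv⟩
    · rintro ⟨i, v⟩ hv ⟨j, w⟩ - h
      simp only [coe_sigma, Set.mem_sigma_iff, mem_coe, mem_erase] at hv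
      exact sigma_mk_eq_of_update_eq hv.2.1 h
    · intro y hy
      obtain ⟨i, hi, hupd⟩ := mwt_sub_eq_one_iff.mp (mem_filter.mp hy).2
      exact ⟨⟨i, y i⟩, by simpa using hi, hupd⟩
  rw [hnbhd, sum_sigma]
  refine sum_congr rfl fun i _ => ?_
  rw [sum_erase_eq_sub (mem_univ _), update_eq_self]

lemma sum_update_radial (c : ℕ → ℝ) (x : ∀ i, ZMod (q i)) (i : Fin n) :
    ∑ v, c (mwt (update x i v))
      = c (mwt (update x i 0)) + (q i - 1) * c (mwt (update x i 0) + 1) := by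
  have h : ∀ v ∈ univ.filter (fun v : ZMod (q i) => v ≠ 0),
      c (mwt (update x i v)) = c (mwt (update x i 0) + 1) := fun v hv => by
    rw [← mwt_update_of_eq_zero (update_self ..) (mem_filter.mp hv).2, update_idem]
  rw [← sum_filter_not_add_sum_filter univ (fun v => v = 0), sum_congr rfl h, sum_const,
    nsmul_eq_mul, cast_card_filter_ne_zero, filter_eq' univ, if_pos (mem_univ _), sum_singleton, add_comm]

lemma adjOp_radial (c : ℕ → ℝ) (x : ∀ i, ZMod (q i)) :
    adjOp (fun y => c (mwt y)) x = mwt x * c (mwt x - 1) + (hammingDegree q - mwt x) * c (mwt x)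
      + upDegree x * (c (mwt x + 1) - c (mwt x)) := by
  have hzero : ∀ i ∈ univ.filter (fun i => x i = 0),
      c (mwt (update x i 0)) + (q i - 1) * c (mwt (update x i 0) + 1) - c (mwt x)
        = (q i - 1) * c (mwt x + 1) := fun i hi => by
    rw [← (mem_filter.mp hi).2, update_eq_self]
    ring
  have hne : ∀ i ∈ univ.filter (fun i => ¬ x i = 0),
      c (mwt (update x i 0)) + (q i - 1) * c (mwt (update x i 0) + 1) - c (mwt x)
        = (q i - 1) * c (mwt x) + (c (mwt x - 1) - c (mwt x)) := fun i hi => by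
    have h := mwt_update_zero_add_one (mem_filter.mp hi).2
    rw [h, ← h, Nat.add_sub_cancel]
    ring
  have hcard : (#(univ.filter fun i => ¬ x i = 0) : ℝ) = mwt x := rfl
  simp_rw [adjOp_eq_sum_update, sum_update_radial]
  rw [← sum_filter_add_sum_filter_not univ (fun i => x i = 0), sum_congr rfl hzero,
    sum_congr rfl hne, sum_add_distrib, ← sum_mul, ← sum_mul, sum_const, nsmul_eq_mul, hcard,
    hammingDegree_eq_upDegree_add x, upDegree]
  ring

end Radial

section Spheres

variable [∀ i, NeZero (q i)]

variable (q) in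
def sphereFinset (m : ℕ) : Finset (∀ i, ZMod (q i)) := univ.filter fun x => mwt x = m

@[simp]
lemma mem_sphereFinset {m : ℕ} {x : ∀ i, ZMod (q i)} : x ∈ sphereFinset q m ↔ mwt x = m := by
  simp [sphereFinset]

lemma sph_eq_card (m : ℕ) : sph q m = #(sphereFinset q m) := by
  rw [sph, Nat.card_eq_fintype_card, Fintype.card_subtype, sphereFinset]

lemma sum_eq_sum_sphereFinset (φ : (∀ i, ZMod (q i)) → ℝ) :
    ∑ x, φ x = ∑ m ∈ range (n + 1), ∑ x ∈ sphereFinset q m, φ x :=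
  (sum_fiberwise_of_maps_to (fun x _ => mem_range.2 (Nat.lt_succ_of_le (mwt_le x))) φ).symm

lemma sum_radial (g : ℕ → ℝ) :
    ∑ x : ∀ i, ZMod (q i), g (mwt x) = ∑ m ∈ range (n + 1), sph q m * g m := by
  rw [sum_eq_sum_sphereFinset]
  refine sum_congr rfl fun m _ => ?_
  rw [sum_congr rfl fun x hx => by rw [mem_sphereFinset.mp hx], sum_const, nsmul_eq_mul,
    sph_eq_card]

lemma card_sphereFinset_succ_filter_ne_zero (m : ℕ) (i : Fin n) :
    #((sphereFinset q (m + 1)).filter fun z => z i ≠ 0)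
      = #((sphereFinset q m).filter fun x => x i = 0)
        * #(univ.filter fun v : ZMod (q i) => v ≠ 0) := by
  rw [← card_product]
  refine (card_nbij' (fun p => update p.1 i p.2) (fun z => (update z i 0, z i)) ?_ ?_ ?_ ?_).symm
  · rintro ⟨x, v⟩ h
    simp only [coe_product, Set.mem_prod, coe_filter, mem_sphereFinset, Set.mem_ofPred_eq,
      mem_univ, true_and] at h ⊢
    exact ⟨by rw [mwt_update_of_eq_zero h.1.2 h.2, h.1.1], by simpa using h.2⟩
  · intro z h
    simp only [coe_product, Set.mem_prod, coe_filter, mem_sphereFinset, Set.mem_ofPred_eq,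
      mem_univ, true_and] at h ⊢
    exact ⟨⟨by have := mwt_update_zero_add_one h.2; omega, by simp⟩, h.2⟩
  · rintro ⟨x, v⟩ h
    simp only [coe_product, Set.mem_prod, coe_filter, Set.mem_ofPred_eq] at h
    simp [← h.1.2]
  · intro z _
    simp

lemma sum_upDegree_sphereFinset (m : ℕ) :
    ∑ x ∈ sphereFinset q m, upDegree x = (m + 1) * sph q (m + 1) := by
  calc ∑ x ∈ sphereFinset q m, upDegree x
      = ∑ i, ∑ x ∈ (sphereFinset q m).filter (fun x => x i = 0), ((q i : ℝ) - 1) :=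
        sum_comm' fun x i => by simp
    _ = ∑ i, (#((sphereFinset q (m + 1)).filter fun z => z i ≠ 0) : ℝ) := by
        simp_rw [card_sphereFinset_succ_filter_ne_zero, Nat.cast_mul, cast_card_filter_ne_zero,
          sum_const, nsmul_eq_mul]
    _ = ∑ z ∈ sphereFinset q (m + 1), (#(univ.filter fun i => z i ≠ 0) : ℝ) := by
        simp_rw [card_eq_sum_ones, Nat.cast_sum]
        exact sum_comm' fun i z => by simp [and_comm]
    _ = (m + 1) * sph q (m + 1) := by
        rw [sum_congr rfl fun z hz => by rw [← mwt, mem_sphereFinset.mp hz], sum_const,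
          nsmul_eq_mul, sph_eq_card]
        push_cast
        ring

lemma succ_mul_sph_succ_le (m : ℕ) :
    (m + 1) * (sph q (m + 1) : ℝ) ≤ (hammingDegree q - m) * sph q m := by
  rw [← sum_upDegree_sphereFinset, sph_eq_card, mul_comm, ← nsmul_eq_mul, ← sum_const]
  refine sum_le_sum fun x hx => ?_
  have := upDegree_add_mwt_le x
  rw [mem_sphereFinset.mp hx] at this
  linarith

lemma sph_pos (hq : ∀ i, 2 ≤ q i) {k : ℕ} (hk : k ≤ n) : 0 < sph q k := by
  have hone : ∀ i, (1 : ZMod (q i)) ≠ 0 := fun i =>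
    haveI : Fact (1 < q i) := ⟨hq i⟩
    one_ne_zero
  rw [sph_eq_card, card_pos]
  refine ⟨fun i => if (i : ℕ) < k then 1 else 0, ?_⟩
  simp only [mem_sphereFinset, mwt, ne_eq, ite_eq_right_iff, hone, imp_false, not_not,
    Fin.card_filter_val_lt, min_eq_right hk]

end Spheres

section LevelTerm

variable [∀ i, NeZero (q i)]

variable (q) in
/-- The contribution of the sphere of radius `m` to `⟨A (c ∘ wt), c ∘ wt⟩`. -/
noncomputable def levelTerm (c : ℕ → ℝ) (m : ℕ) : ℝ :=
  sph q m * ((m * c (m - 1) + (hammingDegree q - m) * c m) * c m)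
    + (m + 1) * sph q (m + 1) * ((c (m + 1) - c m) * c m)

lemma sum_adjOp_radial_mul (c : ℕ → ℝ) :
    ∑ x : ∀ i, ZMod (q i), adjOp (fun y => c (mwt y)) x * c (mwt x)
      = ∑ m ∈ range (n + 1), levelTerm q c m := by
  rw [sum_eq_sum_sphereFinset]
  refine sum_congr rfl fun m _ => ?_
  have h : ∀ x ∈ sphereFinset q m, adjOp (fun y => c (mwt y)) x * c (mwt x)
      = (m * c (m - 1) + (hammingDegree q - m) * c m) * c m
        + upDegree x * ((c (m + 1) - c m) * c m) := fun x hx => by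
    rw [adjOp_radial, mem_sphereFinset.mp hx]
    ring
  rw [sum_congr rfl h, sum_add_distrib, sum_const, nsmul_eq_mul, ← sum_mul,
    sum_upDegree_sphereFinset, ← sph_eq_card, levelTerm]

lemma levelTerm_nonneg {c : ℕ → ℝ} (hc : ∀ k, 0 ≤ c k) (m : ℕ) : 0 ≤ levelTerm q c m := by
  have h := mul_nonneg (sub_nonneg.2 (succ_mul_sph_succ_le (q := q) m)) (sq_nonneg (c m))
  have h₁ : 0 ≤ sph q m * (m * c (m - 1) * c m) :=
    mul_nonneg (Nat.cast_nonneg _) (mul_nonneg (mul_nonneg (Nat.cast_nonneg _) (hc _)) (hc _))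
  have h₂ : 0 ≤ (m + 1) * sph q (m + 1) * (c (m + 1) * c m) :=
    mul_nonneg (by positivity) (mul_nonneg (hc _) (hc _))
  unfold levelTerm
  linarith

end LevelTerm

section ShellProfile

variable (q) in
noncomputable def shellProfile (a b k : ℕ) : ℝ := if k ∈ Icc a b then (√(sph q k))⁻¹ else 0

lemma shellProfile_nonneg (a b k : ℕ) : 0 ≤ shellProfile q a b k := by
  unfold shellProfile
  split_ifs <;> positivity

variable [∀ i, NeZero (q i)]

lemma sum_sq_shellProfile (hq : ∀ i, 2 ≤ q i) {a b : ℕ} (hb : b ≤ n) :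
    ∑ x : ∀ i, ZMod (q i), shellProfile q a b (mwt x) ^ 2 = #(Icc a b) := by
  have hsub : Icc a b ⊆ range (n + 1) := fun k hk => by
    simp only [mem_Icc, mem_range] at hk ⊢
    omega
  have hone : ∀ k ∈ Icc a b, (sph q k : ℝ) * shellProfile q a b k ^ 2 = 1 := fun k hk => by
    have := sph_pos hq ((mem_Icc.mp hk).2.trans hb)
    rw [shellProfile, if_pos hk, inv_pow, Real.sq_sqrt (Nat.cast_nonneg _),
      mul_inv_cancel₀ (by positivity)]
  rw [sum_radial (fun k => shellProfile q a b k ^ 2),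
    ← sum_subset hsub fun k _ hk => by simp [shellProfile, hk], sum_congr rfl hone, sum_const,
    nsmul_one]

lemma levelTerm_shellProfile (hq : ∀ i, 2 ≤ q i) {a b k : ℕ} (hb : b ≤ n)
    (hk : k ∈ Icc (a + 1) (b - 1)) :
    levelTerm q (shellProfile q a b) k
      = k * √(sph q k / sph q (k - 1)) + n * (qa q - 1) - k
        - (k + 1) * (sph q (k + 1) / sph q k) + (k + 1) * √(sph q (k + 1) / sph q k) := by
  obtain ⟨hak, hkb⟩ := mem_Icc.mp hk
  have hs : ∀ j, j ≤ n → (0 : ℝ) < √(sph q j) := fun j hj =>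
    Real.sqrt_pos.mpr (by exact_mod_cast sph_pos hq hj)
  have hprof : ∀ j, k - 1 ≤ j → j ≤ k + 1 → shellProfile q a b j = (√(sph q j))⁻¹ :=
    fun j h₁ h₂ => if_pos (mem_Icc.mpr ⟨by omega, by omega⟩)
  rw [levelTerm, hprof _ le_rfl (by omega), hprof k (by omega) (by omega),
    hprof (k + 1) (by omega) le_rfl, hammingDegree_eq_mul_qa, Real.sqrt_div (Nat.cast_nonneg _),
    Real.sqrt_div (Nat.cast_nonneg _)]
  have h₀ := hs (k - 1) (by omega)
  have h₁ := hs k (by omega)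
  have h₂ := hs (k + 1) (by omega)
  set v := √(sph q k)
  set w := √(sph q (k + 1))
  have hv : (sph q k : ℝ) = v * v := (Real.mul_self_sqrt (Nat.cast_nonneg _)).symm
  have hw : (sph q (k + 1) : ℝ) = w * w := (Real.mul_self_sqrt (Nat.cast_nonneg _)).symm
  rw [hv, hw]
  field_simp
  ring

lemma sum_le_sum_adjOp_shellProfile (hq : ∀ i, 2 ≤ q i) {a b : ℕ} (hb : b ≤ n) :
    ∑ k ∈ Icc (a + 1) (b - 1), ((k : ℝ) * √(sph q k / sph q (k - 1)) + n * (qa q - 1) - k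
        - (k + 1) * (sph q (k + 1) / sph q k) + (k + 1) * √(sph q (k + 1) / sph q k))
      ≤ ∑ x : ∀ i, ZMod (q i),
          adjOp (fun y => shellProfile q a b (mwt y)) x * shellProfile q a b (mwt x) := by
  rw [sum_adjOp_radial_mul, ← sum_congr rfl fun k hk => levelTerm_shellProfile hq hb hk]
  refine sum_le_sum_of_subset_of_nonneg (fun k hk => ?_)
    fun m _ _ => levelTerm_nonneg (shellProfile_nonneg a b) m
  simp only [mem_Icc, mem_range] at hk ⊢
  omega

end ShellProfile

theorem stmt14_general (n : ℕ) (q : Fin n → ℕ) [∀ i, NeZero (q i)]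
    (hq : ∀ i, 2 ≤ q i)
    (r : ℕ) (hr1 : Real.sqrt n < r) (hr2 : r ≤ n) :
    ∃ f : (∀ i, ZMod (q i)) → ℝ, f ≠ 0 ∧ (∀ x, f x ≠ 0 → mwt x ≤ r) ∧
      ∑ x : ∀ i, ZMod (q i), adjOp f x * f x
        ≥ ((1 : ℝ) / (Nat.sqrt n : ℝ))
            * (∑ k ∈ Finset.Icc (r - Nat.sqrt n + 2) (r - 1),
                ((k : ℝ) * Real.sqrt ((sph q k : ℝ) / sph q (k - 1))
                  + (n : ℝ) * (qa q - 1) - (k : ℝ)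
                  - ((k : ℝ) + 1) * ((sph q (k + 1) : ℝ) / sph q k)
                  + ((k : ℝ) + 1) * Real.sqrt ((sph q (k + 1) : ℝ) / sph q k)))
            * ∑ x : ∀ i, ZMod (q i), f x ^ 2 := by
  set M := Nat.sqrt n
  have hMr : M < r := by exact_mod_cast Real.nat_sqrt_le_real_sqrt.trans_lt hr1
  have hM : (M : ℝ) ≠ 0 := by
    have : 0 < M := Nat.sqrt_pos.mpr (by omega)
    positivity
  have hnorm := sum_sq_shellProfile (a := r - M + 1) hq hr2
  rw [Nat.card_Icc, show r + 1 - (r - M + 1) = M by omega] at hnorm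
  refine ⟨fun x => shellProfile q (r - M + 1) r (mwt x), fun h => ?_, fun x hx => ?_, ?_⟩
  · exact hM (by simpa [congrFun h] using hnorm.symm)
  · by_contra hxr
    exact hx (if_neg (by simp only [mem_Icc]; omega))
  · rw [hnorm, mul_assoc, one_div_mul_eq_div, mul_div_cancel_right₀ _ hM]
    exact sum_le_sum_adjOp_shellProfile hq hr2

/-- Lower bound on the maximum eigenvalue of the ball `B_r(0)` in the Hamming
graph, for `√n < r ≤ n` and `M = ⌊√n⌋`: there is a nonzero `f` supported in
`B_r(0)` whose Rayleigh quotient is at least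
`(1/M) ∑_{k=r-M+2}^{r-1} (k √(s_k/s_{k-1}) + n(q̂_a-1) - k - (k+1) s_{k+1}/s_k
+ (k+1) √(s_{k+1}/s_k))`. -/
theorem stmt14 (n : ℕ) (hn : 1 ≤ n) (q : Fin n → ℕ) [∀ i, NeZero (q i)]
    (hq : ∀ i, 2 ≤ q i)
    (r : ℕ) (hr1 : Real.sqrt n < r) (hr2 : r ≤ n) :
    ∃ f : (∀ i, ZMod (q i)) → ℝ, f ≠ 0 ∧ (∀ x, f x ≠ 0 → mwt x ≤ r) ∧
      ∑ x : ∀ i, ZMod (q i), adjOp f x * f x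
        ≥ ((1 : ℝ) / (Nat.sqrt n : ℝ))
            * (∑ k ∈ Finset.Icc (r - Nat.sqrt n + 2) (r - 1),
                ((k : ℝ) * Real.sqrt ((sph q k : ℝ) / sph q (k - 1))
                  + (n : ℝ) * (qa q - 1) - (k : ℝ)
                  - ((k : ℝ) + 1) * ((sph q (k + 1) : ℝ) / sph q k)
                  + ((k : ℝ) + 1) * Real.sqrt ((sph q (k + 1) : ℝ) / sph q k)))
            * ∑ x : ∀ i, ZMod (q i), f x ^ 2 :=
  stmt14_general n q hq r hr1 hr2
end
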